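/- Let G = (V, E) be a finite directed graph with no self-loops and no antiparallel edges, with edge set enumerated as distinct edges e_1, …, e_m, and let f = e_j = (u, v) be a distinguished edge. Let W be the weighted tournament on A = V ∪ {0} constructed from (G, f) as described, and let R be the final relation produced by ranked pairs on W with lexicographic tie-breaking with respect to a linear order on A in which 0 is the minimum. Then for every i ≠ j, the edge e_i belongs to R if and only if e_i belongs to EMAS(G), and the pair (u, 0) belongs to R if and only if f belongs to EMAS(G). -/

import Mathlib

/-- A directed graph (edge relation) has a directed cycle. -/
def HasCycle {α : Type*} (r : α → α → Prop) : Prop :=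
  ∃ x, Relation.TransGen r x x

/-- The edge relation induced by a set of ordered pairs. -/
def relOf {α : Type*} (S : Set (α × α)) : α → α → Prop :=
  fun x y => (x, y) ∈ S

open Classical in
/-- Greedy procedure: process the pairs in the list in order, adding each pair
unless it would create a directed cycle.  Applied to the edge list of a digraph it
yields the edge maximal acyclic subgraph EMAS; applied to the list of all ordered
pairs of distinct candidates sorted by decreasing weight (ties broken
lexicographically) it yields the final ranked pairs relation. -/
noncomputable def greedy {α : Type*} (l : List (α × α)) : Set (α × α) :=
  l.foldl (fun S e => if HasCycle (relOf (insert e S)) then S else insert e S) ∅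

/-- The weight function of the tournament `W` on `A = V ∪ {0}` (encoded as `WithBot V`,
with `0 = ⊥`) built from the edge list `es` (0-indexed; edge `es[i]` corresponds to
`e_{i+1}`) and the distinguished edge `f = es[j] = (u, v)`:
`μ(0, v) = m + 1`, `μ(u, 0) = m - j` (0-indexed `j`), `μ(es[i]) = m - i` for `i ≠ j`,
and every other ordered pair has weight `0`. -/
def wt {V : Type*} [DecidableEq V] (es : List (V × V)) (j : ℕ) (u v : V)
    (p : WithBot V × WithBot V) : ℕ :=
  if p.1 = ⊥ then (if p.2 = (v : WithBot V) then es.length + 1 else 0)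
  else if p.2 = ⊥ then (if p.1 = (u : WithBot V) then es.length - j else 0)
  else
    let x := p.1.unbotD u
    let y := p.2.unbotD u
    if (x, y) ∈ es ∧ (x, y) ≠ (u, v) then es.length - es.idxOf (x, y) else 0

/-- Processing priority for ranked pairs: larger weight first,
ties broken lexicographically with respect to the linear order on candidates. -/
def prio {A : Type*} [LinearOrder A] (w : A × A → ℕ) (p q : A × A) : Prop :=
  w q < w p ∨ (w p = w q ∧ (p.1 < q.1 ∨ (p.1 = q.1 ∧ p.2 < q.2)))

open Classical in
noncomputable def gstep {α : Type*} (S : Set (α × α)) (e : α × α) : Set (α × α) :=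
  if HasCycle (relOf (insert e S)) then S else insert e S

lemma greedy_eq_foldl {α : Type*} (l : List (α × α)) : greedy l = l.foldl gstep ∅ := rfl

lemma subset_gstep {α : Type*} (S : Set (α × α)) (e : α × α) : S ⊆ gstep S e := by
  unfold gstep; split
  · exact le_refl _
  · exact Set.subset_insert _ _

lemma gstep_subset {α : Type*} (S : Set (α × α)) (e : α × α) : gstep S e ⊆ insert e S := by
  unfold gstep; split
  · exact Set.subset_insert _ _
  · exact le_refl _

lemma subset_foldl {α : Type*} (l : List (α × α)) (S : Set (α × α)) :
    S ⊆ l.foldl gstep S := by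
  induction l generalizing S with
  | nil => exact le_refl _
  | cons a l ih => exact (subset_gstep S a).trans (ih _)

lemma foldl_subset {α : Type*} (l : List (α × α)) (S : Set (α × α)) :
    l.foldl gstep S ⊆ S ∪ {p | p ∈ l} := by
  induction l generalizing S with
  | nil => simp
  | cons a l ih =>
    intro x hx
    rcases ih (gstep S a) hx with h | h
    · rcases gstep_subset S a h with h | h
      · exact Or.inr (by simp [h])
      · exact Or.inl h
    · exact Or.inr (by simp_all)

lemma mem_foldl_of_not_mem {α : Type*} {l : List (α × α)} {S : Set (α × α)}
    {p : α × α} (hp : p ∉ l) : p ∈ l.foldl gstep S ↔ p ∈ S := by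
  constructor
  · intro h
    rcases foldl_subset l S h with h | h
    · exact h
    · exact absurd h hp
  · exact fun h => subset_foldl l S h

/-- Evaluate membership of `p` in `greedy l` when `l` splits at `p`. -/
lemma mem_greedy_split {α : Type*} {l l₁ l₂ : List (α × α)} {p : α × α}
    (hl : l = l₁ ++ p :: l₂) (h1 : p ∉ l₁) (h2 : p ∉ l₂) :
    (p ∈ greedy l ↔ ¬ HasCycle (relOf (insert p (l₁.foldl gstep ∅)))) := by
  subst hl
  rw [greedy_eq_foldl, List.foldl_append, List.foldl_cons]
  rw [mem_foldl_of_not_mem h2]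
  have hpS : p ∉ l₁.foldl gstep ∅ := by
    intro h
    rcases foldl_subset l₁ ∅ h with h | h
    · exact h
    · exact h1 h
  unfold gstep
  split
  · next hc => exact iff_of_false hpS (not_not_intro hc)
  · next hc => exact iff_of_true (Set.mem_insert _ _) hc

/-- Two lists sorted by an asymmetric relation with the same members are equal. -/
lemma sorted_ext {α : Type*} {r : α → α → Prop} (hasym : ∀ a b, r a b → ¬ r b a) :
    ∀ {l₁ l₂ : List α}, l₁.Pairwise r → l₂.Pairwise r →
      (∀ x, x ∈ l₁ ↔ x ∈ l₂) → l₁ = l₂ := by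
  intro l₁
  induction l₁ with
  | nil =>
    intro l₂ _ _ h
    cases l₂ with
    | nil => rfl
    | cons b t => exact absurd ((h b).2 (by simp)) List.not_mem_nil
  | cons a t ih =>
    intro l₂ h₁ h₂ h
    cases l₂ with
    | nil => exact absurd ((h a).1 (by simp)) List.not_mem_nil
    | cons b t₂ =>
      have hirr : ∀ x, ¬ r x x := fun x hx => hasym x x hx hx
      have hab : a = b := by
        by_contra hne
        have ha : a ∈ b :: t₂ := (h a).1 (by simp)
        have hb : b ∈ a :: t := (h b).2 (by simp)
        simp only [List.mem_cons] at ha hb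
        rcases ha with h' | ha; · exact hne h'
        rcases hb with h' | hb; · exact hne h'.symm
        exact hasym _ _ ((List.pairwise_cons.1 h₂).1 a ha) ((List.pairwise_cons.1 h₁).1 b hb)
      subst hab
      have : t = t₂ := by
        apply ih (List.pairwise_cons.1 h₁).2 (List.pairwise_cons.1 h₂).2
        intro x
        constructor
        · intro hx
          have hax : r a x := (List.pairwise_cons.1 h₁).1 x hx
          have : x ∈ a :: t₂ := (h x).1 (by simp [hx])
          rcases List.mem_cons.1 this with h' | h'
          · exact absurd (h' ▸ hax) (hirr a)
          · exact h'
        · intro hx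
          have hax : r a x := (List.pairwise_cons.1 h₂).1 x hx
          have : x ∈ a :: t := (h x).2 (by simp [hx])
          rcases List.mem_cons.1 this with h' | h'
          · exact absurd (h' ▸ hax) (hirr a)
          · exact h'
      rw [this]
section cyc
variable {V : Type*}

/-- The lifted edge set on `WithBot V`. -/
def liftSet (u v : V) (U : Set (V × V)) : Set (WithBot V × WithBot V) :=
  insert ((⊥ : WithBot V), (v : WithBot V))
    ({p | ∃ q ∈ U, q ≠ (u, v) ∧ p = ((q.1 : WithBot V), (q.2 : WithBot V))} ∪
      {p | p = ((u : WithBot V), (⊥ : WithBot V)) ∧ (u, v) ∈ U})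

lemma mem_liftSet_iff {u v : V} {U : Set (V × V)} {p : WithBot V × WithBot V} :
    p ∈ liftSet u v U ↔
      p = ((⊥ : WithBot V), (v : WithBot V)) ∨
      (∃ q ∈ U, q ≠ (u, v) ∧ p = ((q.1 : WithBot V), (q.2 : WithBot V))) ∨
      (p = ((u : WithBot V), (⊥ : WithBot V)) ∧ (u, v) ∈ U) := by
  simp [liftSet, or_assoc]

lemma transGen_lift {α β : Type*} {r : α → α → Prop} {r' : β → β → Prop} {f : α → β}
    (h : ∀ a b, r a b → Relation.TransGen r' (f a) (f b)) :
    ∀ {a b}, Relation.TransGen r a b → Relation.TransGen r' (f a) (f b) := by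
  intro a b hab
  induction hab with
  | single h1 => exact h _ _ h1
  | tail _ h1 ih => exact ih.trans (h _ _ h1)

lemma claimD {u v : V} (huv : u ≠ v) {U : Set (V × V)} :
    ∀ {a b : WithBot V}, Relation.TransGen (relOf (liftSet u v U)) a b →
      ((Relation.TransGen (relOf U) (a.unbotD v) (b.unbotD u) ∨
        (a = (u : WithBot V) ∧ b = ⊥) ∨ (a = ⊥ ∧ b = (v : WithBot V))) ∧
       (b = ⊥ → (u, v) ∈ U)) := by
  intro a b hab
  induction hab with
  | single h1 =>
    rcases mem_liftSet_iff.1 h1 with h | ⟨q, hq, hqf, h⟩ | ⟨h, hU⟩ <;>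
      simp only [Prod.mk.injEq] at h <;> obtain ⟨h1', h2'⟩ := h <;> subst h1' <;> subst h2'
    · exact ⟨Or.inr (Or.inr ⟨rfl, rfl⟩), fun hb => absurd hb WithBot.coe_ne_bot⟩
    · refine ⟨Or.inl ?_, fun hb => absurd hb WithBot.coe_ne_bot⟩
      simpa using Relation.TransGen.single (show relOf U q.1 q.2 from hq)
    · exact ⟨Or.inr (Or.inl ⟨rfl, rfl⟩), fun _ => hU⟩
  | tail _ h1 ih =>
    rename_i b c _
    rcases mem_liftSet_iff.1 h1 with h | ⟨q, hq, hqf, h⟩ | ⟨h, hU⟩ <;>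
      simp only [Prod.mk.injEq] at h <;> obtain ⟨h1', h2'⟩ := h <;> subst h1' <;> subst h2'
    · -- edge (b,c) = (⊥, v)
      have hUf : (u, v) ∈ U := ih.2 rfl
      refine ⟨?_, fun hc => absurd hc WithBot.coe_ne_bot⟩
      rcases ih.1 with ht | ⟨ha, _⟩ | ⟨_, hb'⟩
      · left
        simp only [WithBot.unbotD_bot] at ht ⊢
        simpa using ht.tail (show relOf U u v from hUf)
      · left
        rw [ha]
        simpa using Relation.TransGen.single (show relOf U u v from hUf)
      · exact absurd hb' (Ne.symm WithBot.coe_ne_bot)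
    · -- edge (b,c) coerced q
      refine ⟨?_, fun hc' => absurd hc' WithBot.coe_ne_bot⟩
      rcases ih.1 with ht | ⟨_, hb⟩ | ⟨ha, hb⟩
      · left
        simp only [WithBot.unbotD_coe] at ht ⊢
        exact ht.tail (show relOf U q.1 q.2 from hq)
      · exact absurd hb WithBot.coe_ne_bot
      · left
        rw [ha]
        have hq1 : q.1 = v := WithBot.coe_inj.1 hb
        simp only [WithBot.unbotD_bot, WithBot.unbotD_coe]
        exact Relation.TransGen.single (show relOf U v q.2 from hq1 ▸ hq)
    · -- edge (b,c) = (u, ⊥)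
      refine ⟨?_, fun _ => hU⟩
      rcases ih.1 with ht | ⟨_, hb⟩ | ⟨ha, hb⟩
      · left
        simpa using ht
      · exact absurd hb WithBot.coe_ne_bot
      · exact absurd (WithBot.coe_inj.1 hb.symm) huv.symm

lemma cycle_lift {u v : V} (huv : u ≠ v) (U : Set (V × V)) :
    HasCycle (relOf (liftSet u v U)) ↔ HasCycle (relOf U) := by
  constructor
  · rintro ⟨x, hx⟩
    have h := claimD huv hx
    rcases h.1 with ht | ⟨h1, h2⟩ | ⟨h1, h2⟩
    · cases x with
      | bot =>
        have hUf : (u, v) ∈ U := h.2 rfl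
        simp only [WithBot.unbotD_bot] at ht
        exact ⟨v, ht.tail (show relOf U u v from hUf)⟩
      | coe a =>
        exact ⟨a, by simpa using ht⟩
    · exact absurd (h1 ▸ h2) WithBot.coe_ne_bot
    · rw [h1] at h2
      exact absurd h2 (Ne.symm WithBot.coe_ne_bot)
  · rintro ⟨x, hx⟩
    refine ⟨(x : WithBot V), ?_⟩
    refine transGen_lift (f := fun (a : V) => (a : WithBot V)) ?_ hx
    intro a b hab
    by_cases hf : (a, b) = (u, v)
    · simp only [Prod.mk.injEq] at hf
      obtain ⟨h1, h2⟩ := hf; subst h1; subst h2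
      refine Relation.TransGen.head (b := ⊥) ?_ (Relation.TransGen.single ?_)
      · exact mem_liftSet_iff.2 (Or.inr (Or.inr ⟨rfl, hab⟩))
      · exact mem_liftSet_iff.2 (Or.inl rfl)
    · exact Relation.TransGen.single (mem_liftSet_iff.2 (Or.inr (Or.inl ⟨(a, b), hab, hf, rfl⟩)))

end cyc
section lift2
variable {V : Type*} [DecidableEq V]

/-- The pair of `WithBot V` corresponding to an edge of `V`. -/
def lifted (u v : V) (e : V × V) : WithBot V × WithBot V :=
  if e = (u, v) then ((u : WithBot V), (⊥ : WithBot V)) else ((e.1 : WithBot V), (e.2 : WithBot V))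

lemma insert_lifted (u v : V) (e : V × V) (U : Set (V × V)) :
    insert (lifted u v e) (liftSet u v U) = liftSet u v (insert e U) := by
  ext p
  by_cases hf : e = (u, v)
  · subst hf
    simp only [lifted, if_pos rfl, Set.mem_insert_iff, mem_liftSet_iff]
    constructor
    · rintro (h | h | ⟨q, hq, hqf, h⟩ | ⟨h, hU⟩)
      · exact Or.inr (Or.inr ⟨h, by simp⟩)
      · exact Or.inl h
      · exact Or.inr (Or.inl ⟨q, Or.inr hq, hqf, h⟩)
      · exact Or.inr (Or.inr ⟨h, by simp⟩)
    · rintro (h | ⟨q, hq | hq, hqf, h⟩ | ⟨h, _⟩)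
      · exact Or.inr (Or.inl h)
      · exact absurd hq hqf
      · exact Or.inr (Or.inr (Or.inl ⟨q, hq, hqf, h⟩))
      · exact Or.inl h
  · simp only [lifted, if_neg hf, Set.mem_insert_iff, mem_liftSet_iff]
    constructor
    · rintro (h | h | ⟨q, hq, hqf, h⟩ | ⟨h, hU⟩)
      · exact Or.inr (Or.inl ⟨e, Or.inl rfl, hf, h⟩)
      · exact Or.inl h
      · exact Or.inr (Or.inl ⟨q, Or.inr hq, hqf, h⟩)
      · exact Or.inr (Or.inr ⟨h, Or.inr hU⟩)
    · rintro (h | ⟨q, hq | hq, hqf, h⟩ | ⟨h, hU | hU⟩)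
      · exact Or.inr (Or.inl h)
      · exact Or.inl (hq ▸ h)
      · exact Or.inr (Or.inr (Or.inl ⟨q, hq, hqf, h⟩))
      · exact absurd hU.symm hf
      · exact Or.inr (Or.inr (Or.inr ⟨h, hU⟩))

lemma not_transGen_empty {α : Type*} : ∀ {a b : α}, ¬ Relation.TransGen (relOf (∅ : Set (α × α))) a b := by
  intro a b h
  induction h with
  | single h => exact h
  | tail _ h _ => exact h

lemma not_hasCycle_empty {α : Type*} : ¬ HasCycle (relOf (∅ : Set (α × α))) := by
  rintro ⟨x, hx⟩
  exact not_transGen_empty hx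

lemma liftSet_empty (u v : V) : liftSet u v (∅ : Set (V × V)) =
    {((⊥ : WithBot V), (v : WithBot V))} := by
  ext p
  simp [mem_liftSet_iff]

lemma gstep_liftSet {u v : V} (huv : u ≠ v) (U : Set (V × V)) (e : V × V) :
    gstep (liftSet u v U) (lifted u v e) = liftSet u v (gstep U e) := by
  unfold gstep
  rw [insert_lifted]
  by_cases hc : HasCycle (relOf (insert e U))
  · rw [if_pos ((cycle_lift huv _).2 hc), if_pos hc]
  · rw [if_neg (fun h => hc ((cycle_lift huv _).1 h)), if_neg hc]

lemma foldl_lift {u v : V} (huv : u ≠ v) (es' : List (V × V)) (U : Set (V × V)) :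
    (es'.map (lifted u v)).foldl gstep (liftSet u v U) = liftSet u v (es'.foldl gstep U) := by
  induction es' generalizing U with
  | nil => rfl
  | cons e t ih =>
    simp only [List.map_cons, List.foldl_cons, gstep_liftSet huv]
    exact ih _

lemma prio_asymm {A : Type*} [LinearOrder A] (w : A × A → ℕ) (p q : A × A)
    (h1 : prio w p q) (h2 : prio w q p) : False := by
  rcases h1 with h1 | ⟨e1, h1⟩ <;> rcases h2 with h2 | ⟨e2, h2⟩
  · omega
  · omega
  · omega
  · rcases h1 with h1 | ⟨e1', h1⟩ <;> rcases h2 with h2 | ⟨e2', h2⟩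
    · exact absurd h2 (lt_asymm h1)
    · exact absurd (e2' ▸ h1) (lt_irrefl _)
    · exact absurd (e1' ▸ h2) (lt_irrefl _)
    · exact absurd h2 (lt_asymm h1)

lemma prio_irrefl {A : Type*} [LinearOrder A] (w : A × A → ℕ) (p : A × A)
    (h : prio w p p) : False := prio_asymm w p p h h

end lift2
section wtlem
variable {V : Type*} [DecidableEq V]

lemma beq_inst_eq : (instBEqProd : BEq (V × V)) = instBEqOfDecidableEq := by
  apply beq_ext
  intro x y
  show (x.1 == y.1 && x.2 == y.2) = decide (x = y)
  by_cases h : x = y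
  · subst h; simp
  · have : ¬(x.1 = y.1 ∧ x.2 = y.2) := fun hc => h (Prod.ext hc.1 hc.2)
    rcases not_and_or.1 this with h' | h' <;> simp [h, h']

lemma wt_s (es : List (V × V)) (j : ℕ) (u v : V) :
    wt es j u v ((⊥ : WithBot V), (v : WithBot V)) = es.length + 1 := by
  simp [wt]

lemma wt_lifted (es : List (V × V)) (hnd : es.Nodup) (j : Fin es.length) (u v : V)
    (hf : es.get j = (u, v)) (k : Fin es.length) :
    wt es j.1 u v (lifted u v (es.get k)) = es.length - k.1 := by
  by_cases hk : es.get k = (u, v)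
  · have hkj : k = j := hnd.get_inj_iff.1 (hk.trans hf.symm)
    subst hkj
    rw [hk]
    simp [lifted, wt]
  · have hmem : es.get k ∈ es := es.get_mem _
    have hidx : es.idxOf (es.get k) = k.1 := by
      rw [beq_inst_eq]
      have h1 : @List.idxOf _ instBEqOfDecidableEq (es.get k) es < es.length :=
        (@List.idxOf_lt_length_iff _ instBEqOfDecidableEq _ _ _).2 hmem
      have h2 : es.get ⟨_, h1⟩ = es.get k := @List.idxOf_get _ instBEqOfDecidableEq _ _ _ h1
      exact congrArg Fin.val (hnd.get_inj_iff.1 h2)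
    simp only [lifted, if_neg hk, wt, WithBot.coe_ne_bot, if_false,
      WithBot.unbotD_coe]
    rw [if_pos]
    · rw [hidx]
    · exact ⟨hmem, hk⟩

lemma wt_shape (es : List (V × V)) (j : Fin es.length) (u v : V)
    (hf : es.get j = (u, v)) (x : WithBot V × WithBot V)
    (hx : 0 < wt es j.1 u v x) :
    x = ((⊥ : WithBot V), (v : WithBot V)) ∨ ∃ k : Fin es.length, x = lifted u v (es.get k) := by
  obtain ⟨x1, x2⟩ := x
  unfold wt at hx
  by_cases h1 : x1 = ⊥
  · rw [if_pos h1] at hx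
    by_cases h2 : x2 = (v : WithBot V)
    · exact Or.inl (by rw [h1, h2])
    · rw [if_neg h2] at hx; omega
  · rw [if_neg h1] at hx
    by_cases h3 : x2 = ⊥
    · rw [if_pos h3] at hx
      by_cases h4 : x1 = (u : WithBot V)
      · refine Or.inr ⟨j, ?_⟩
        rw [h3, h4, hf]
        simp [lifted]
      · rw [if_neg h4] at hx; omega
    · rw [if_neg h3] at hx
      simp only at hx
      by_cases h5 : (x1.unbotD u, x2.unbotD u) ∈ es ∧ (x1.unbotD u, x2.unbotD u) ≠ (u, v)
      · obtain ⟨hmem, hne⟩ := h5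
        have h6 : @List.idxOf _ instBEqOfDecidableEq (x1.unbotD u, x2.unbotD u) es < es.length :=
          (@List.idxOf_lt_length_iff _ instBEqOfDecidableEq _ _ _).2 hmem
        refine Or.inr ⟨⟨_, h6⟩, ?_⟩
        have h7 : es.get ⟨_, h6⟩ = (x1.unbotD u, x2.unbotD u) := @List.idxOf_get _ instBEqOfDecidableEq _ _ _ h6
        rw [h7]
        obtain ⟨a, ha⟩ := WithBot.ne_bot_iff_exists.1 h1
        obtain ⟨b, hb⟩ := WithBot.ne_bot_iff_exists.1 h3
        rw [lifted, if_neg hne, ← ha, ← hb]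
        simp
      · rw [if_neg h5] at hx; omega

end wtlem

lemma main_key {V : Type*} [Fintype V] [LinearOrder V]
    (es : List (V × V)) (hnd : es.Nodup)
    (hirr : ∀ e ∈ es, e.1 ≠ e.2)
    (j : Fin es.length) (u v : V) (hf : es.get j = (u, v))
    (l : List (WithBot V × WithBot V))
    (hmem : ∀ p : WithBot V × WithBot V, p ∈ l ↔ p.1 ≠ p.2)
    (hsort : l.Pairwise (prio (wt es j.1 u v)))
    (i : Fin es.length) :
    (lifted u v (es.get i) ∈ greedy l ↔ es.get i ∈ greedy es) := by
  classical
  have huv : u ≠ v := hirr (u, v) (hf ▸ es.get_mem j)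
  set w := wt es j.1 u v with hw
  set p := lifted u v (es.get i) with hp
  set s : WithBot V × WithBot V := ((⊥ : WithBot V), (v : WithBot V)) with hsdef
  have him : i.1 < es.length := i.2
  have hwp : w p = es.length - i.1 := wt_lifted es hnd j u v hf i
  have hws : w s = es.length + 1 := wt_s es j.1 u v
  -- membership of lifted edges in l
  have hlift_mem : ∀ k : Fin es.length, lifted u v (es.get k) ∈ l := by
    intro k
    rw [hmem]
    by_cases hk : es.get k = (u, v)
    · rw [hk]; simp [lifted]
    · simp only [lifted, if_neg hk]
      exact fun h => hirr _ (es.get_mem k) (WithBot.coe_inj.1 h)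
  have hs_mem : s ∈ l := (hmem s).2 WithBot.bot_ne_coe
  -- split l at p
  obtain ⟨l₁, l₂, hl⟩ := List.append_of_mem (hlift_mem i)
  have hsort' : l.Pairwise (prio w) := hsort
  rw [hl, List.pairwise_append] at hsort'
  obtain ⟨hP1, hP2, hP3⟩ := hsort'
  have hpl₂ : ∀ y ∈ l₂, prio w p y := (List.pairwise_cons.1 hP2).1
  have hpl₁ : ∀ x ∈ l₁, prio w x p := fun x hx => hP3 x hx p List.mem_cons_self
  have hpn1 : p ∉ l₁ := fun hc => prio_irrefl w p (hpl₁ p hc)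
  have hpn2 : p ∉ l₂ := fun hc => prio_irrefl w p (hpl₂ p hc)
  -- membership characterization of l₁
  have hmem₁ : ∀ x, x ∈ l₁ ↔ (x ∈ l ∧ prio w x p) := by
    intro x
    constructor
    · exact fun hx => ⟨hl ▸ List.mem_append.2 (Or.inl hx), hpl₁ x hx⟩
    · rintro ⟨hxl, hxp⟩
      rw [hl, List.mem_append, List.mem_cons] at hxl
      rcases hxl with h | h | h
      · exact h
      · rw [h] at hxp; exact absurd hxp (fun hc => prio_irrefl w p hc)
      · exact absurd hxp (fun hc => prio_asymm w x p hc (hpl₂ x h))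
  -- the explicit prefix
  set pre : List (WithBot V × WithBot V) := s :: (es.take i.1).map (lifted u v) with hpre
  have hmapmem : ∀ x, x ∈ (es.take i.1).map (lifted u v) ↔
      ∃ k : Fin es.length, k.1 < i.1 ∧ x = lifted u v (es.get k) := by
    intro x
    rw [List.mem_map]
    constructor
    · rintro ⟨a, ha, rfl⟩
      obtain ⟨n, hn, hna⟩ := List.mem_iff_getElem.1 ha
      rw [List.length_take] at hn
      have hnm : n < es.length := lt_of_lt_of_le hn (min_le_right _ _)
      refine ⟨⟨n, hnm⟩, lt_of_lt_of_le hn (min_le_left _ _), ?_⟩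
      rw [← hna, List.getElem_take]
      simp [List.get_eq_getElem]
    · rintro ⟨k, hk, rfl⟩
      refine ⟨es.get k, ?_, rfl⟩
      have hkt : k.1 < (es.take i.1).length := by
        rw [List.length_take]; exact lt_min hk k.2
      have : (es.take i.1)[k.1] = es[k.1] := List.getElem_take
      rw [List.get_eq_getElem, ← this]
      exact List.getElem_mem hkt
  have hwlift : ∀ k : Fin es.length, w (lifted u v (es.get k)) = es.length - k.1 :=
    fun k => wt_lifted es hnd j u v hf k
  -- pre is sorted
  have hpre_sorted : pre.Pairwise (prio w) := by
    rw [hpre, List.pairwise_cons]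
    constructor
    · intro x hx
      obtain ⟨k, hk, rfl⟩ := (hmapmem x).1 hx
      left
      rw [hws, hwlift k]
      omega
    · rw [List.pairwise_iff_getElem]
      intro n n' hn hn' hnn'
      rw [List.length_map, List.length_take] at hn hn'
      have h1 : n < es.length := lt_of_lt_of_le hn (min_le_right _ _)
      have h2 : n' < es.length := lt_of_lt_of_le hn' (min_le_right _ _)
      have e1 : ((es.take i.1).map (lifted u v))[n] = lifted u v (es.get ⟨n, h1⟩) := by
        rw [List.getElem_map, List.getElem_take]
        simp [List.get_eq_getElem]
      have e2 : ((es.take i.1).map (lifted u v))[n'] = lifted u v (es.get ⟨n', h2⟩) := by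
        rw [List.getElem_map, List.getElem_take]
        simp [List.get_eq_getElem]
      rw [e1, e2]
      left
      rw [hwlift ⟨n, h1⟩, hwlift ⟨n', h2⟩]
      simp only [Fin.val_mk]
      omega
  -- membership characterization of pre
  have hmem_pre : ∀ x, x ∈ pre ↔ (x ∈ l ∧ prio w x p) := by
    intro x
    rw [hpre, List.mem_cons, hmapmem]
    constructor
    · rintro (rfl | ⟨k, hk, rfl⟩)
      · exact ⟨hs_mem, Or.inl (by rw [hwp, hws]; omega)⟩
      · exact ⟨hlift_mem k, Or.inl (by rw [hwp, hwlift k]; omega)⟩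
    · rintro ⟨hxl, hxp⟩
      have hxpos : 0 < w x := by
        rcases hxp with h | ⟨h, _⟩
        · rw [hwp] at h; omega
        · rw [h, hwp]; omega
      rcases wt_shape es j u v hf x hxpos with rfl | ⟨k, rfl⟩
      · exact Or.inl rfl
      · right
        refine ⟨k, ?_, rfl⟩
        rcases hxp with h | ⟨h, hlex⟩
        · rw [hwp, hwlift k] at h
          have := k.2
          omega
        · exfalso
          rw [hwp, hwlift k] at h
          have hki : k = i := Fin.ext (by have := k.2; omega)
          subst hki
          rcases hlex with h' | ⟨_, h'⟩
          · exact lt_irrefl _ (hp ▸ h')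
          · exact lt_irrefl _ (hp ▸ h')
  -- l₁ = pre
  have hl₁ : l₁ = pre := by
    refine sorted_ext (fun a b h1 h2 => prio_asymm w a b h1 h2) hP1 hpre_sorted ?_
    intro x
    rw [hmem₁ x, hmem_pre x]
  -- evaluate greedy on l
  have heval : p ∈ greedy l ↔ ¬ HasCycle (relOf (insert p (l₁.foldl gstep ∅))) :=
    mem_greedy_split hl hpn1 hpn2
  have h0 : ¬ HasCycle (relOf (insert s (∅ : Set (WithBot V × WithBot V)))) := by
    have : insert s (∅ : Set (WithBot V × WithBot V)) = liftSet u v ∅ := by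
      rw [liftSet_empty]; simp [hsdef]
    rw [this]
    exact fun h => not_hasCycle_empty ((cycle_lift huv _).1 h)
  have hstep0 : gstep (∅ : Set (WithBot V × WithBot V)) s = liftSet u v ∅ := by
    unfold gstep
    rw [if_neg h0, liftSet_empty]
    simp [hsdef]
  have hfold : l₁.foldl gstep ∅ = liftSet u v ((es.take i.1).foldl gstep ∅) := by
    rw [hl₁, hpre, List.foldl_cons, hstep0, foldl_lift huv]
  -- evaluate greedy on es
  have hes : es = es.take i.1 ++ es.get i :: es.drop (i.1 + 1) := by
    conv_lhs => rw [← List.take_append_drop i.1 es]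
    rw [List.drop_eq_getElem_cons i.2]
    simp [List.get_eq_getElem]
  have hnd' := hnd
  rw [hes, List.nodup_append] at hnd'
  obtain ⟨_, hnd2, hdisj⟩ := hnd'
  have hni1 : es.get i ∉ es.take i.1 := fun hc => hdisj _ hc _ List.mem_cons_self rfl
  have hni2 : es.get i ∉ es.drop (i.1 + 1) := (List.nodup_cons.1 hnd2).1
  have heval' : es.get i ∈ greedy es ↔
      ¬ HasCycle (relOf (insert (es.get i) ((es.take i.1).foldl gstep ∅))) :=
    mem_greedy_split hes hni1 hni2
  rw [heval, heval', hfold, hp, insert_lifted, cycle_lift huv]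
theorem stmt_16 {V : Type*} [Fintype V] [LinearOrder V]
    (es : List (V × V)) (hnd : es.Nodup)
    (hirr : ∀ e ∈ es, e.1 ≠ e.2)
    (hanti : ∀ e ∈ es, (e.2, e.1) ∉ es)
    (j : Fin es.length) (u v : V) (hf : es.get j = (u, v))
    (l : List (WithBot V × WithBot V))
    (hmem : ∀ p : WithBot V × WithBot V, p ∈ l ↔ p.1 ≠ p.2)
    (hsort : l.Pairwise (prio (wt es j.1 u v))) :
    (∀ i : Fin es.length, i ≠ j →
        ((((es.get i).1 : WithBot V), ((es.get i).2 : WithBot V)) ∈ greedy l ↔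
          es.get i ∈ greedy es)) ∧
    (((u : WithBot V), (⊥ : WithBot V)) ∈ greedy l ↔ (u, v) ∈ greedy es) := by
  constructor
  · intro i hij
    have hne : es.get i ≠ (u, v) := fun hc => hij (hnd.get_inj_iff.1 (hc.trans hf.symm))
    have h := main_key es hnd hirr j u v hf l hmem hsort i
    rwa [show lifted u v (es.get i) =
      (((es.get i).1 : WithBot V), ((es.get i).2 : WithBot V)) from if_neg hne] at h
  · have h := main_key es hnd hirr j u v hf l hmem hsort j
    rw [hf] at h
    rwa [show lifted u v (u, v) = ((u : WithBot V), (⊥ : WithBot V)) from if_pos rfl] at h
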